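/- Let d ≥ 1 be an integer and let a₁, a₂, b₁, b₂ be reals with a₁ ≥ b₁ > 0, a₁ < d, a₁ + b₁ > d, a₂ ≥ 0, b₂ ≥ 0, and a₂ ≥ b₂ if a₁ = b₁. Then there exists C < ∞ depending only on d, a₁, a₂, b₁, b₂ (in particular independent of L and x) such that for every real L ≥ 1 and every x ∈ ℤ^d: Σ_{y∈ℤ^d} ⟨x−y⟩_L^{−a₁}·(log⟨(x−y)/L⟩₁)^{−a₂} · ⟨y⟩_L^{−b₁}·(log⟨y/L⟩₁)^{−b₂} ≤ C · ⟨x⟩_L^{d−a₁} · ⟨x⟩_L^{−b₁}·(log⟨x/L⟩₁)^{−b₂}. (Convolution bound on power functions with logarithmic corrections, case a₁ < d with a₁ + b₁ > d.) -/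

import Mathlib

open scoped BigOperators
open Real Filter

noncomputable section

/-- Embed a lattice point into Euclidean space. -/
def toR (d : ℕ) (x : Fin d → ℤ) : EuclideanSpace ℝ (Fin d) := WithLp.toLp 2 (fun i => (x i : ℝ))

/-- Euclidean norm of a lattice point. -/
def nrm (d : ℕ) (x : Fin d → ℤ) : ℝ := ‖toR d x‖

/-- Euclidean inner product between `k` and a lattice point `x`. -/
def dotp (d : ℕ) (k : EuclideanSpace ℝ (Fin d)) (x : Fin d → ℤ) : ℝ :=
  ∑ i, k i * (x i : ℝ)

/-- `D` is a (symmetric) step distribution on `ℤ^d`. -/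
def IsStepDistribution (d : ℕ) (D : (Fin d → ℤ) → ℝ) : Prop :=
  (∀ x, 0 ≤ D x) ∧ HasSum D 1 ∧ (∀ x, D (-x) = D x)

/-- The power-law condition with parameters `α, L, c`. -/
def PowerLawCondition (d : ℕ) (α L c : ℝ) (D : (Fin d → ℤ) → ℝ) : Prop :=
  ∀ x, c * L ^ (-(d : ℝ)) * (max (nrm d x / L) 1) ^ (-(d : ℝ) - α) ≤ D x ∧
       D x ≤ c⁻¹ * L ^ (-(d : ℝ)) * (max (nrm d x / L) 1) ^ (-(d : ℝ) - α)

/-- Fourier transform `D̂(k) = Σ_x cos(k⬝x) D(x)`. -/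
def fhat (d : ℕ) (D : (Fin d → ℤ) → ℝ) (k : EuclideanSpace ℝ (Fin d)) : ℝ :=
  ∑' x : Fin d → ℤ, Real.cos (dotp d k x) * D x

/-- `n`-fold convolution of `D` (with the 0-fold convolution the delta at 0). -/
def convPow (d : ℕ) (D : (Fin d → ℤ) → ℝ) : ℕ → (Fin d → ℤ) → ℝ
  | 0 => fun x => if x = 0 then 1 else 0
  | n + 1 => fun x => ∑' y : Fin d → ℤ, convPow d D n y * D (x - y)

/-- Random-walk Green function `S₁(x) = Σ_n D^{*n}(x)`. -/
def green (d : ℕ) (D : (Fin d → ℤ) → ℝ) (x : Fin d → ℤ) : ℝ :=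
  ∑' n : ℕ, convPow d D n x

/-- `⟨t⟩_r = (π/2) ⬝ max(t, r)`. -/
def vee (t r : ℝ) : ℝ := Real.pi / 2 * max t r

/-- The constant `γ_α`. -/
def gammaA (d : ℕ) (α : ℝ) : ℝ :=
  Real.Gamma (((d : ℝ) - α) / 2) /
    (2 ^ α * Real.pi ^ ((d : ℝ) / 2) * Real.Gamma (α / 2))

namespace ConvAux

variable {d : ℕ}

/-- sup norm as a natural number -/
def nu (y : Fin d → ℤ) : ℕ := Finset.univ.sup fun i => (y i).natAbs

lemma toR_sub (x y : Fin d → ℤ) : toR d (x - y) = toR d x - toR d y := by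
  ext i; simp [toR]

lemma nrm_nonneg (y : Fin d → ℤ) : 0 ≤ nrm d y := norm_nonneg _

lemma nrm_sub_nrm_le (x y : Fin d → ℤ) : nrm d x - nrm d y ≤ nrm d (x - y) := by
  have := norm_sub_norm_le (toR d x) (toR d y)
  rw [← toR_sub] at this
  exact this

lemma abs_coord_le_nrm (y : Fin d → ℤ) (i : Fin d) : |(y i : ℝ)| ≤ nrm d y := by
  have h := EuclideanSpace.norm_eq (toR d y)
  have h1 : |(y i : ℝ)| = Real.sqrt (‖(y i : ℝ)‖ ^ 2) := by
    rw [Real.sqrt_sq_eq_abs]; simp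
  rw [nrm, h]
  rw [h1]
  apply Real.sqrt_le_sqrt
  have : ‖(y i : ℝ)‖ ^ 2 = ‖toR d y i‖ ^ 2 := by simp [toR]
  rw [this]
  exact Finset.single_le_sum (f := fun j => ‖toR d y j‖ ^ 2)
    (fun j _ => by positivity) (Finset.mem_univ i)

lemma nu_le_nrm (hd : 1 ≤ d) (y : Fin d → ℤ) : (nu y : ℝ) ≤ nrm d y := by
  have hne : (Finset.univ : Finset (Fin d)).Nonempty := by
    refine Finset.univ_nonempty_iff.mpr ?_
    exact Fin.pos_iff_nonempty.mp hd
  obtain ⟨i, -, hi⟩ := Finset.exists_mem_eq_sup Finset.univ hne fun j => (y j).natAbs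
  rw [nu, hi]
  have : ((y i).natAbs : ℝ) = |(y i : ℝ)| := by
    rw [Nat.cast_natAbs]; simp
  rw [this]; exact abs_coord_le_nrm y i

lemma nu_mem_box {y : Fin d → ℤ} {n : ℕ} (h : nu y ≤ n) :
    y ∈ Fintype.piFinset fun _ : Fin d => Finset.Icc (-(n:ℤ)) (n:ℤ) := by
  rw [Fintype.mem_piFinset]
  intro i
  have : (y i).natAbs ≤ n :=
    le_trans (Finset.le_sup (f := fun j => (y j).natAbs) (Finset.mem_univ i)) h
  rw [Finset.mem_Icc]
  omega

lemma card_box (n : ℕ) :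
    ((Fintype.piFinset fun _ : Fin d => Finset.Icc (-(n:ℤ)) (n:ℤ)).card) = (2*n+1)^d := by
  rw [Fintype.card_piFinset]
  simp only [Int.card_Icc]
  rw [Finset.prod_const]
  congr 1
  · omega
  · simp

lemma card_le_of_nu_le {F : Finset (Fin d → ℤ)} {n : ℕ} (h : ∀ y ∈ F, nu y ≤ n) :
    F.card ≤ (2*n+1)^d := by
  rw [← card_box (d := d) n]
  exact Finset.card_le_card fun y hy => nu_mem_box (h y hy)

/-- fibering function -/
def fib (N₀ : ℕ) (y : Fin d → ℤ) : ℕ := Nat.log 2 (nu y / N₀ + 1)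

lemma fib_ub {N₀ : ℕ} (h : 1 ≤ N₀) (y : Fin d → ℤ) :
    nu y < N₀ * 2 ^ (fib N₀ y + 1) := by
  have h1 : nu y / N₀ + 1 < 2 ^ (fib N₀ y + 1) := Nat.lt_pow_succ_log_self (by norm_num) _
  have h2 : nu y / N₀ < 2 ^ (fib N₀ y + 1) := by omega
  have h3 := (Nat.div_lt_iff_lt_mul (by omega : 0 < N₀)).mp h2
  rw [mul_comm]
  omega

lemma fib_lb {N₀ : ℕ} (h : 1 ≤ N₀) (y : Fin d → ℤ) :
    N₀ * 2 ^ (fib N₀ y) ≤ nu y + N₀ := by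
  have h1 : 2 ^ (fib N₀ y) ≤ nu y / N₀ + 1 := Nat.pow_log_le_self 2 (Nat.succ_ne_zero _)
  have h2 : (nu y / N₀) * N₀ ≤ nu y := Nat.div_mul_le_self _ _
  calc N₀ * 2 ^ (fib N₀ y) = 2 ^ (fib N₀ y) * N₀ := mul_comm _ _
  _ ≤ (nu y / N₀ + 1) * N₀ := Nat.mul_le_mul_right _ h1
  _ = (nu y / N₀) * N₀ + N₀ := by ring
  _ ≤ nu y + N₀ := by omega

lemma fiber_sum_le (s : ℝ) (hs : 0 ≤ s) (M₀ : ℝ) (hM : 1 ≤ M₀)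
    (F : Finset (Fin d → ℤ)) (j : ℕ) :
    ∑ y ∈ F.filter (fun y => fib ⌈M₀⌉₊ y = j), (max (nu y : ℝ) M₀) ^ (-s)
      ≤ 8^d * 3^s * (M₀ * 2^j) ^ ((d:ℝ) - s) := by
  have hM0 : (0:ℝ) < M₀ := by linarith
  set N₀ := ⌈M₀⌉₊ with hN₀
  have hN1 : 1 ≤ N₀ := Nat.one_le_iff_ne_zero.mpr (by positivity)
  have hMN : M₀ ≤ (N₀:ℝ) := Nat.le_ceil M₀
  have hNM : (N₀:ℝ) ≤ 2*M₀ := by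
    have := Nat.ceil_lt_add_one (le_of_lt hM0)
    linarith
  have hx0 : (0:ℝ) < M₀ * 2^j := by positivity
  have hterm : ∀ y ∈ F.filter (fun y => fib N₀ y = j),
      (max (nu y : ℝ) M₀) ^ (-s) ≤ 3^s * (M₀ * 2^j) ^ (-s) := by
    intro y hy
    have hfib : fib N₀ y = j := (Finset.mem_filter.mp hy).2
    have hlb := fib_lb hN1 y
    rw [hfib] at hlb
    have hlbR : (N₀:ℝ) * 2^j ≤ (nu y : ℝ) + (N₀:ℝ) := by
      have := (Nat.cast_le (α := ℝ)).mpr hlb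
      push_cast at this
      linarith
    have hmax : M₀ * 2^j / 3 ≤ max (nu y : ℝ) M₀ := by
      have h1 : M₀ * 2^j ≤ (N₀:ℝ) * 2^j :=
        mul_le_mul_of_nonneg_right hMN (by positivity)
      have h2 : (nu y : ℝ) ≤ max (nu y : ℝ) M₀ := le_max_left _ _
      have h3 : M₀ ≤ max (nu y : ℝ) M₀ := le_max_right _ _
      linarith
    calc (max (nu y : ℝ) M₀) ^ (-s) ≤ (M₀ * 2^j / 3) ^ (-s) :=
          rpow_le_rpow_of_nonpos (by positivity) hmax (neg_nonpos.mpr hs)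
    _ = 3^s * (M₀ * 2^j) ^ (-s) := by
        rw [div_rpow (le_of_lt hx0) (by norm_num), rpow_neg (by norm_num : (0:ℝ) ≤ 3)]
        field_simp
  have hcardN : (F.filter (fun y => fib N₀ y = j)).card ≤ (2*(N₀*2^(j+1) - 1)+1)^d := by
    apply card_le_of_nu_le
    intro y hy
    have hfib : fib N₀ y = j := (Finset.mem_filter.mp hy).2
    have := fib_ub hN1 y
    rw [hfib] at this
    have hpos : 0 < N₀ * 2^(j+1) := Nat.mul_pos hN1 (pow_pos (by norm_num) _)
    omega
  have hcardR : ((F.filter (fun y => fib N₀ y = j)).card : ℝ) ≤ (8 * M₀ * 2^j)^d := by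
    have h1 : (2*(N₀*2^(j+1) - 1)+1 : ℕ) ≤ N₀ * 2^(j+2) := by
      have hpos : 0 < N₀ * 2^(j+1) := Nat.mul_pos hN1 (pow_pos (by norm_num) _)
      have h2 : N₀ * 2^(j+2) = 2 * (N₀ * 2^(j+1)) := by ring
      omega
    have h3 : (F.filter (fun y => fib N₀ y = j)).card ≤ (N₀ * 2^(j+2))^d :=
      le_trans hcardN (Nat.pow_le_pow_left h1 d)
    have h4 : ((N₀ * 2^(j+2) : ℕ) : ℝ) ≤ 8 * M₀ * 2^j := by
      push_cast
      have h24 : (2:ℝ)^(j+2) = 4 * 2^j := by ring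
      rw [h24]
      nlinarith [pow_pos (two_pos (α := ℝ)) j]
    calc ((F.filter (fun y => fib N₀ y = j)).card : ℝ)
        ≤ (((N₀ * 2^(j+2))^d : ℕ) : ℝ) := by exact_mod_cast h3
    _ = (((N₀ * 2^(j+2) : ℕ) : ℝ))^d := by push_cast; ring
    _ ≤ (8 * M₀ * 2^j)^d := pow_le_pow_left₀ (by positivity) h4 d
  calc ∑ y ∈ F.filter (fun y => fib N₀ y = j), (max (nu y : ℝ) M₀) ^ (-s)
      ≤ ∑ _y ∈ F.filter (fun y => fib N₀ y = j), 3^s * (M₀ * 2^j) ^ (-s) :=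
        Finset.sum_le_sum hterm
  _ = ((F.filter (fun y => fib N₀ y = j)).card : ℝ) * (3^s * (M₀ * 2^j) ^ (-s)) := by
        rw [Finset.sum_const, nsmul_eq_mul]
  _ ≤ (8 * M₀ * 2^j)^d * (3^s * (M₀ * 2^j) ^ (-s)) := by
        apply mul_le_mul_of_nonneg_right hcardR (by positivity)
  _ = 8^d * 3^s * (M₀ * 2^j) ^ ((d:ℝ) - s) := by
        have h8 : (8 * M₀ * 2^j : ℝ)^d = 8^d * (M₀*2^j)^d := by
          rw [mul_assoc, mul_pow]
        rw [h8, sub_eq_add_neg, rpow_add hx0, ← rpow_natCast (M₀ * 2^j) d]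
        ring

lemma ceil_facts (M₀ : ℝ) (hM : 1 ≤ M₀) :
    1 ≤ ⌈M₀⌉₊ ∧ M₀ ≤ (⌈M₀⌉₊:ℝ) ∧ ((⌈M₀⌉₊:ℝ)) ≤ 2*M₀ := by
  have hM0 : (0:ℝ) < M₀ := by linarith
  refine ⟨Nat.one_le_iff_ne_zero.mpr (by positivity), Nat.le_ceil M₀, ?_⟩
  have := Nat.ceil_lt_add_one (le_of_lt hM0)
  linarith

lemma fib_max_lb (M₀ : ℝ) (hM : 1 ≤ M₀) (y : Fin d → ℤ) :
    M₀ * 2^(fib ⌈M₀⌉₊ y) ≤ 3 * max (nu y : ℝ) M₀ := by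
  obtain ⟨hN1, hMN, hNM⟩ := ceil_facts M₀ hM
  have hlb := fib_lb hN1 y
  have hlbR : ((⌈M₀⌉₊:ℝ)) * 2^(fib ⌈M₀⌉₊ y) ≤ (nu y : ℝ) + (⌈M₀⌉₊:ℝ) := by
    have := (Nat.cast_le (α := ℝ)).mpr hlb
    push_cast at this
    linarith
  have h1 : M₀ * 2^(fib ⌈M₀⌉₊ y) ≤ ((⌈M₀⌉₊:ℝ)) * 2^(fib ⌈M₀⌉₊ y) :=
    mul_le_mul_of_nonneg_right hMN (by positivity)
  have h2 : (nu y : ℝ) ≤ max (nu y : ℝ) M₀ := le_max_left _ _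
  have h3 : M₀ ≤ max (nu y : ℝ) M₀ := le_max_right _ _
  linarith

lemma pow_two_rpow (j : ℕ) (e : ℝ) : ((2:ℝ)^j)^e = ((2:ℝ)^e)^j := by
  rw [← rpow_natCast 2 j, ← rpow_mul (by norm_num), mul_comm,
    rpow_mul (by norm_num : (0:ℝ) ≤ 2), rpow_natCast]

lemma tailSum (s : ℝ) (hs0 : 0 ≤ s) (hs : (d:ℝ) < s) :
    ∃ C : ℝ, 0 < C ∧ ∀ M₀ : ℝ, 1 ≤ M₀ → ∀ F : Finset (Fin d → ℤ),
      ∑ y ∈ F, (max (nu y : ℝ) M₀) ^ (-s) ≤ C * M₀ ^ ((d:ℝ) - s) := by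
  set r := (2:ℝ) ^ ((d:ℝ) - s) with hr
  have hr0 : (0:ℝ) < r := rpow_pos_of_pos two_pos _
  have hr1 : r < 1 := rpow_lt_one_of_one_lt_of_neg one_lt_two (by linarith)
  have h1r : (0:ℝ) < 1 - r := by linarith
  refine ⟨8^d * 3^s * (1-r)⁻¹, by positivity, fun M₀ hM F => ?_⟩
  have hM0 : (0:ℝ) < M₀ := by linarith
  rw [← Finset.sum_fiberwise_of_maps_to
    (t := F.image (fib ⌈M₀⌉₊)) (fun y hy => Finset.mem_image_of_mem _ hy)]
  have key : ∀ j ∈ F.image (fib ⌈M₀⌉₊),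
      ∑ y ∈ F.filter (fun y => fib ⌈M₀⌉₊ y = j), (max (nu y : ℝ) M₀) ^ (-s)
        ≤ 8^d * 3^s * M₀ ^ ((d:ℝ) - s) * r^j := by
    intro j _
    refine le_trans (fiber_sum_le s hs0 M₀ hM F j) (le_of_eq ?_)
    rw [mul_rpow (le_of_lt hM0) (by positivity), pow_two_rpow j ((d:ℝ)-s)]
    ring
  calc ∑ j ∈ F.image (fib ⌈M₀⌉₊), ∑ y ∈ F.filter (fun y => fib ⌈M₀⌉₊ y = j),
        (max (nu y : ℝ) M₀) ^ (-s)
      ≤ ∑ j ∈ F.image (fib ⌈M₀⌉₊), 8^d * 3^s * M₀ ^ ((d:ℝ) - s) * r^j :=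
        Finset.sum_le_sum key
  _ = 8^d * 3^s * M₀ ^ ((d:ℝ) - s) * ∑ j ∈ F.image (fib ⌈M₀⌉₊), r^j := by
        rw [Finset.mul_sum]
  _ ≤ 8^d * 3^s * M₀ ^ ((d:ℝ) - s) * (1-r)⁻¹ := by
        apply mul_le_mul_of_nonneg_left _ (by positivity)
        rw [← tsum_geometric_of_lt_one (le_of_lt hr0) hr1]
        exact Summable.sum_le_tsum _ (fun j _ => pow_nonneg (le_of_lt hr0) j)
          (summable_geometric_of_lt_one (le_of_lt hr0) hr1)
  _ = 8^d * 3^s * (1-r)⁻¹ * M₀ ^ ((d:ℝ) - s) := by ring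

lemma partialSum (s : ℝ) (hs0 : 0 ≤ s) (hs : s < (d:ℝ)) :
    ∃ C : ℝ, 0 < C ∧ ∀ L : ℝ, 1 ≤ L → ∀ R : ℝ, L ≤ R → ∀ F : Finset (Fin d → ℤ),
      (∀ y ∈ F, (nu y : ℝ) ≤ R) →
      ∑ y ∈ F, (max (nu y : ℝ) L) ^ (-s) ≤ C * R ^ ((d:ℝ) - s) := by
  set r := (2:ℝ) ^ ((d:ℝ) - s) with hr
  have hr0 : (0:ℝ) < r := rpow_pos_of_pos two_pos _
  have hr1 : 1 < r := by
    have := rpow_lt_rpow_of_exponent_lt (one_lt_two (α := ℝ)) (by linarith : (0:ℝ) < (d:ℝ) - s)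
    rwa [rpow_zero] at this
  have hr1' : (0:ℝ) < r - 1 := by linarith
  refine ⟨8^d * 3^s * 3^((d:ℝ)-s) * r * (r-1)⁻¹, by positivity, ?_⟩
  intro L hL R hR F hF
  have hL0 : (0:ℝ) < L := by linarith
  have hR0 : (0:ℝ) < R := by linarith
  have hRL1 : (1:ℝ) ≤ 3*R/L := by
    rw [le_div_iff₀ hL0]; linarith
  have hfl : 1 ≤ ⌊3*R/L⌋₊ := Nat.le_floor (by simpa using hRL1)
  set J := Nat.log 2 ⌊3*R/L⌋₊ with hJ
  have himg : ∀ j ∈ F.image (fib ⌈L⌉₊), j ≤ J := by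
    intro j hj
    obtain ⟨y, hyF, hyj⟩ := Finset.mem_image.mp hj
    have h1 : L * 2^j ≤ 3 * R := by
      have := fib_max_lb L hL y
      rw [hyj] at this
      have hmax : max (nu y : ℝ) L ≤ R := max_le (hF y hyF) hR
      linarith
    have h2 : ((2^j : ℕ) : ℝ) ≤ 3*R/L := by
      push_cast
      rw [le_div_iff₀ hL0]
      linarith [h1, mul_comm L ((2:ℝ)^j)]
    have h3 : (2^j : ℕ) ≤ ⌊3*R/L⌋₊ := Nat.le_floor h2
    exact (Nat.le_log_iff_pow_le (by norm_num) (by omega)).mpr h3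
  have h2J : ((2:ℝ))^J ≤ 3*R/L := by
    have h1 : (2^J : ℕ) ≤ ⌊3*R/L⌋₊ := Nat.pow_log_le_self 2 (by omega)
    calc ((2:ℝ))^J = ((2^J : ℕ) : ℝ) := by push_cast; ring
    _ ≤ (⌊3*R/L⌋₊ : ℝ) := by exact_mod_cast h1
    _ ≤ 3*R/L := Nat.floor_le (by positivity)
  have hrJ : r^J ≤ (3*R/L) ^ ((d:ℝ) - s) := by
    rw [← pow_two_rpow J ((d:ℝ)-s)]
    exact rpow_le_rpow (by positivity) h2J (by linarith)
  rw [← Finset.sum_fiberwise_of_maps_to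
    (t := F.image (fib ⌈L⌉₊)) (fun y hy => Finset.mem_image_of_mem _ hy)]
  have key : ∀ j ∈ F.image (fib ⌈L⌉₊),
      ∑ y ∈ F.filter (fun y => fib ⌈L⌉₊ y = j), (max (nu y : ℝ) L) ^ (-s)
        ≤ 8^d * 3^s * L ^ ((d:ℝ) - s) * r^j := by
    intro j _
    refine le_trans (fiber_sum_le s hs0 L hL F j) (le_of_eq ?_)
    rw [mul_rpow (le_of_lt hL0) (by positivity), pow_two_rpow j ((d:ℝ)-s)]
    ring
  have hgeom : ∑ j ∈ F.image (fib ⌈L⌉₊), r^j ≤ r * r^J * (r-1)⁻¹ := by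
    calc ∑ j ∈ F.image (fib ⌈L⌉₊), r^j
        ≤ ∑ j ∈ Finset.range (J+1), r^j := by
          apply Finset.sum_le_sum_of_subset_of_nonneg
          · intro j hj
            exact Finset.mem_range.mpr (Nat.lt_succ_of_le (himg j hj))
          · intro j _ _
            exact pow_nonneg (le_of_lt hr0) j
    _ = (r^(J+1) - 1)/(r-1) := geom_sum_eq (ne_of_gt hr1) (J+1)
    _ ≤ r^(J+1)/(r-1) :=
          (div_le_div_iff_of_pos_right (by linarith)).mpr (by linarith)
    _ = r * r^J * (r-1)⁻¹ := by rw [pow_succ]; ring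
  calc ∑ j ∈ F.image (fib ⌈L⌉₊), ∑ y ∈ F.filter (fun y => fib ⌈L⌉₊ y = j),
        (max (nu y : ℝ) L) ^ (-s)
      ≤ ∑ j ∈ F.image (fib ⌈L⌉₊), 8^d * 3^s * L ^ ((d:ℝ) - s) * r^j :=
        Finset.sum_le_sum key
  _ = 8^d * 3^s * L ^ ((d:ℝ) - s) * ∑ j ∈ F.image (fib ⌈L⌉₊), r^j := by
        rw [Finset.mul_sum]
  _ ≤ 8^d * 3^s * L ^ ((d:ℝ) - s) * (r * r^J * (r-1)⁻¹) :=
        mul_le_mul_of_nonneg_left hgeom (by positivity)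
  _ ≤ 8^d * 3^s * L ^ ((d:ℝ) - s) * (r * (3*R/L) ^ ((d:ℝ) - s) * (r-1)⁻¹) := by
        apply mul_le_mul_of_nonneg_left _ (by positivity)
        have h1 : (0:ℝ) ≤ (r-1)⁻¹ := by
          apply inv_nonneg.mpr; linarith
        apply mul_le_mul_of_nonneg_right _ h1
        exact mul_le_mul_of_nonneg_left hrJ (le_of_lt hr0)
  _ = 8^d * 3^s * 3^((d:ℝ)-s) * r * (r-1)⁻¹ * R ^ ((d:ℝ) - s) := by
        rw [div_rpow (by positivity) (le_of_lt hL0), mul_rpow (by norm_num) (le_of_lt hR0)]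
        have hLp : L ^ ((d:ℝ)-s) ≠ 0 := ne_of_gt (rpow_pos_of_pos hL0 _)
        field_simp

lemma pull_neg {x y c : ℝ} (hx : 0 < x) (hc : 0 < c) (h : x ≤ c * y) {e : ℝ} (he : 0 ≤ e) :
    y ^ (-e) ≤ c ^ e * x ^ (-e) := by
  have hcy : 0 < c * y := lt_of_lt_of_le hx h
  have hy : 0 < y := by
    rcases mul_pos_iff.mp hcy with ⟨_, hy⟩ | ⟨hc', _⟩
    · exact hy
    · linarith
  calc y ^ (-e) ≤ (x / c) ^ (-e) := by
        apply rpow_le_rpow_of_nonpos (by positivity) _ (neg_nonpos.mpr he)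
        rw [div_le_iff₀ hc, mul_comm]
        exact h
  _ = c ^ e * x ^ (-e) := by
        rw [div_rpow hx.le hc.le, rpow_neg hc.le, div_eq_mul_inv, inv_inv]
        ring

lemma pi_half_gt_one : (1:ℝ) < Real.pi / 2 := by
  have := Real.pi_gt_three
  linarith

lemma c0_pos : 0 < Real.log (Real.pi / 2) := Real.log_pos pi_half_gt_one

lemma log_lower {t L : ℝ} (hL : 1 ≤ L) (ht : L ≤ t) :
    Real.log (Real.pi / 2) ≤ Real.log (Real.pi / 2 * t / L) := by
  have hP : (0:ℝ) < Real.pi / 2 := by linarith [pi_half_gt_one]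
  have hL0 : (0:ℝ) < L := by linarith
  apply Real.log_le_log hP
  rw [le_div_iff₀ hL0]
  nlinarith

lemma log_lower_pos {t L : ℝ} (hL : 1 ≤ L) (ht : L ≤ t) :
    0 < Real.log (Real.pi / 2 * t / L) := lt_of_lt_of_le c0_pos (log_lower hL ht)

lemma drop_log {t L : ℝ} (hL : 1 ≤ L) (ht : L ≤ t) {e : ℝ} (he : 0 ≤ e) :
    (Real.log (Real.pi / 2 * t / L)) ^ (-e) ≤ (Real.log (Real.pi / 2)) ^ (-e) :=
  rpow_le_rpow_of_nonpos c0_pos (log_lower hL ht) (neg_nonpos.mpr he)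

lemma log_upper {L u v : ℝ} (hL : 1 ≤ L) (hu : L ≤ u) (hv : L ≤ v) (huv : u ≤ 2 * v) :
    Real.log (Real.pi / 2 * u / L)
      ≤ (1 + Real.log 2 / Real.log (Real.pi / 2)) * Real.log (Real.pi / 2 * v / L) := by
  have hP : (0:ℝ) < Real.pi / 2 := by linarith [pi_half_gt_one]
  have hL0 : (0:ℝ) < L := by linarith
  have hv0 : (0:ℝ) < v := by linarith
  have hu0 : (0:ℝ) < u := by linarith
  have h1 : Real.log (Real.pi / 2 * u / L) ≤ Real.log (2 * (Real.pi / 2 * v / L)) := by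
    apply Real.log_le_log (div_pos (mul_pos hP hu0) hL0)
    rw [div_le_iff₀ hL0]
    have : 2 * (Real.pi / 2 * v / L) * L = 2 * (Real.pi / 2 * v) := by
      field_simp
    rw [this]
    nlinarith
  have h2 : Real.log (2 * (Real.pi / 2 * v / L)) = Real.log 2 + Real.log (Real.pi / 2 * v / L) :=
    Real.log_mul (by norm_num) (by positivity)
  have h3 : Real.log (Real.pi / 2) ≤ Real.log (Real.pi / 2 * v / L) := log_lower hL hv
  have h4 : Real.log 2 ≤ Real.log 2 / Real.log (Real.pi / 2) * Real.log (Real.pi / 2 * v / L) := by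
    rw [div_mul_eq_mul_div, le_div_iff₀ c0_pos]
    have hl2 : (0:ℝ) ≤ Real.log 2 := Real.log_nonneg (by norm_num)
    nlinarith
  calc Real.log (Real.pi / 2 * u / L) ≤ Real.log 2 + Real.log (Real.pi / 2 * v / L) := by
        rw [← h2]; exact h1
  _ ≤ (1 + Real.log 2 / Real.log (Real.pi / 2)) * Real.log (Real.pi / 2 * v / L) := by
        nlinarith [h4, log_lower_pos hL hv]

lemma slow_bound {c₀ δ : ℝ} (hc : 0 < c₀) (hδ : 0 < δ) :
    ∀ r : ℝ, 1 ≤ r → 1 + Real.log r / c₀ ≤ (1 + 1/(δ*c₀)) * r ^ δ := by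
  intro r hr
  have h1 : Real.log r ≤ r ^ δ / δ := Real.log_le_rpow_div (by linarith) hδ
  have h2 : (1:ℝ) ≤ r ^ δ := Real.one_le_rpow hr hδ.le
  have h3 : Real.log r / c₀ ≤ r ^ δ / (δ * c₀) := by
    rw [← div_div]
    gcongr
  have expand : (1 + 1/(δ*c₀)) * r ^ δ = r ^ δ + 1/(δ*c₀) * r ^ δ := by ring
  have h4 : r ^ δ / (δ * c₀) = 1/(δ*c₀) * r ^ δ := by ring
  rw [expand]
  linarith [h3, h4]

lemma log_eps {b₂ eps : ℝ} (hb₂ : 0 ≤ b₂) (heps : 0 < eps) :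
    ∃ C : ℝ, 0 < C ∧ ∀ L t a : ℝ, 1 ≤ L → L ≤ t → t ≤ a →
      (Real.log (Real.pi / 2 * t / L)) ^ (-b₂)
        ≤ C * (a/t) ^ eps * (Real.log (Real.pi / 2 * a / L)) ^ (-b₂) := by
  set δ := eps / (b₂ + 1) with hδdef
  have hδ : 0 < δ := by positivity
  set C₁ := 1 + 1/(δ * Real.log (Real.pi / 2)) with hC₁
  have hC₁0 : 0 < C₁ := by
    have := c0_pos
    positivity
  refine ⟨C₁ ^ b₂, by positivity, ?_⟩
  intro L t a hL ht hta
  have hL0 : (0:ℝ) < L := by linarith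
  have ht0 : (0:ℝ) < t := by linarith
  have ha0 : (0:ℝ) < a := by linarith
  have hat1 : (1:ℝ) ≤ a / t := (one_le_div ht0).mpr hta
  have hP : (0:ℝ) < Real.pi / 2 := by linarith [pi_half_gt_one]
  have hkey : Real.log (Real.pi / 2 * a / L)
      ≤ (1 + Real.log (a/t) / Real.log (Real.pi / 2)) * Real.log (Real.pi / 2 * t / L) := by
    have h1 : Real.pi / 2 * a / L = (Real.pi / 2 * t / L) * (a / t) := by
      field_simp
    have h2 : Real.log (Real.pi / 2 * a / L)
        = Real.log (Real.pi / 2 * t / L) + Real.log (a/t) := by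
      rw [h1, Real.log_mul (by positivity) (by positivity)]
    have h3 := log_lower hL ht
    have h4 : Real.log (a/t) ≤ Real.log (a/t) / Real.log (Real.pi / 2)
        * Real.log (Real.pi / 2 * t / L) := by
      rw [div_mul_eq_mul_div, le_div_iff₀ c0_pos]
      have hl2 : (0:ℝ) ≤ Real.log (a/t) := Real.log_nonneg hat1
      nlinarith
    nlinarith [log_lower_pos hL ht]
  have hslow : 1 + Real.log (a/t) / Real.log (Real.pi / 2) ≤ C₁ * (a/t) ^ δ :=
    slow_bound c0_pos hδ (a/t) hat1
  have hpos : 0 < C₁ * (a/t) ^ δ := by positivity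
  have hfin : Real.log (Real.pi / 2 * a / L)
      ≤ (C₁ * (a/t) ^ δ) * Real.log (Real.pi / 2 * t / L) := by
    have := log_lower_pos hL ht
    nlinarith
  have hpull := pull_neg (log_lower_pos hL (ht.trans hta)) hpos hfin hb₂
  have hfac : (C₁ * (a/t) ^ δ) ^ b₂ ≤ C₁ ^ b₂ * (a/t) ^ eps := by
    rw [mul_rpow hC₁0.le (by positivity), ← rpow_mul (by positivity : (0:ℝ) ≤ a/t)]
    apply mul_le_mul_of_nonneg_left _ (by positivity)
    apply rpow_le_rpow_of_exponent_le hat1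
    rw [hδdef]
    rw [div_mul_eq_mul_div, div_le_iff₀ (by positivity : (0:ℝ) < b₂ + 1)]
    nlinarith
  calc (Real.log (Real.pi / 2 * t / L)) ^ (-b₂)
      ≤ (C₁ * (a/t) ^ δ) ^ b₂ * (Real.log (Real.pi / 2 * a / L)) ^ (-b₂) := hpull
  _ ≤ C₁ ^ b₂ * (a/t) ^ eps * (Real.log (Real.pi / 2 * a / L)) ^ (-b₂) := by
      apply mul_le_mul_of_nonneg_right hfac
      exact rpow_nonneg (le_of_lt (log_lower_pos hL (ht.trans hta))) _

end ConvAux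

set_option maxHeartbeats 1000000 in
/-- Convolution bound on power functions with logarithmic corrections,
case `a₁ < d` with `a₁ + b₁ > d`. -/
theorem conv_bound_a1_lt_d
    (d : ℕ) (hd : 1 ≤ d) (a₁ a₂ b₁ b₂ : ℝ)
    (hab : b₁ ≤ a₁) (hb₁ : 0 < b₁) (ha₁ : a₁ < (d : ℝ))
    (hsum : (d : ℝ) < a₁ + b₁)
    (ha₂ : 0 ≤ a₂) (hb₂ : 0 ≤ b₂) (heq : a₁ = b₁ → b₂ ≤ a₂) :
    ∃ C : ℝ, 0 < C ∧
      ∀ L : ℝ, 1 ≤ L → ∀ x : Fin d → ℤ,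
        (∑' y : Fin d → ℤ,
            vee (nrm d (x - y)) L ^ (-a₁) *
              Real.log (vee (nrm d (x - y) / L) 1) ^ (-a₂) *
            (vee (nrm d y) L ^ (-b₁) * Real.log (vee (nrm d y / L) 1) ^ (-b₂)))
          ≤ C * vee (nrm d x) L ^ ((d : ℝ) - a₁) *
              (vee (nrm d x) L ^ (-b₁) * Real.log (vee (nrm d x / L) 1) ^ (-b₂)) := by
  classical
  have hd1 : (1:ℝ) ≤ (d:ℝ) := by exact_mod_cast hd
  have hb₁d : b₁ < (d:ℝ) := lt_of_le_of_lt hab ha₁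
  have ha₁0 : 0 < a₁ := lt_of_lt_of_le hb₁ hab
  set ε := ((d:ℝ) - b₁)/2 with hεdef
  have hε : 0 < ε := by rw [hεdef]; linarith
  have hbe : 0 ≤ b₁ + ε := by linarith
  have hbed : b₁ + ε < (d:ℝ) := by rw [hεdef]; linarith
  obtain ⟨C₁, hC₁, H₁⟩ := ConvAux.partialSum (d := d) (b₁ + ε) hbe hbed
  obtain ⟨C₂, hC₂, H₂⟩ := ConvAux.partialSum (d := d) a₁ (le_of_lt ha₁0) ha₁
  obtain ⟨C₃, hC₃, H₃⟩ := ConvAux.tailSum (d := d) (a₁ + b₁) (by linarith) hsum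
  obtain ⟨C₄, hC₄, H₄⟩ := ConvAux.log_eps hb₂ hε
  have hc₀ := ConvAux.c0_pos
  set c₀ := Real.log (Real.pi/2) with hc₀def
  have hl2 : (0:ℝ) ≤ Real.log 2 := Real.log_nonneg one_le_two
  set κ := 1 + Real.log 2 / c₀ with hκdef
  have hκ0 : 0 < κ := by
    rw [hκdef]
    have : 0 ≤ Real.log 2 / c₀ := div_nonneg hl2 hc₀.le
    linarith
  have hP1 : (1:ℝ) < Real.pi/2 := ConvAux.pi_half_gt_one
  have hP0 : (0:ℝ) < Real.pi/2 := by linarith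
  -- positive atoms
  have hc₀a : 0 < c₀ ^ (-a₂) := rpow_pos_of_pos hc₀ _
  have hκb : 0 < κ ^ b₂ := rpow_pos_of_pos hκ0 _
  have hPa : 0 < (Real.pi/2) ^ (-a₁) := rpow_pos_of_pos hP0 _
  have hPb : 0 < (Real.pi/2) ^ (-b₁) := rpow_pos_of_pos hP0 _
  have h2a : 0 < (2:ℝ) ^ a₁ := rpow_pos_of_pos two_pos _
  have h2b : 0 < (2:ℝ) ^ b₁ := rpow_pos_of_pos two_pos _
  have hQ : 0 < (2/(Real.pi/2)) ^ (a₁+b₁) := rpow_pos_of_pos (by positivity) _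
  set K₁ := 2^a₁ * c₀^(-a₂) * C₄ * C₁ * (Real.pi/2)^(-a₁) * (Real.pi/2)^(-b₁) with hK₁
  set K₂ := 2^b₁ * κ^b₂ * c₀^(-a₂) * C₂ * (Real.pi/2)^(-a₁) * (Real.pi/2)^(-b₁) with hK₂
  set K₃ := c₀^(-a₂) * κ^b₂ * (2/(Real.pi/2))^(a₁+b₁) * C₃ with hK₃
  have hK₁0 : 0 < K₁ := by
    rw [hK₁]
    exact mul_pos (mul_pos (mul_pos (mul_pos (mul_pos h2a hc₀a) hC₄) hC₁) hPa) hPb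
  have hK₂0 : 0 < K₂ := by
    rw [hK₂]
    exact mul_pos (mul_pos (mul_pos (mul_pos (mul_pos h2b hκb) hc₀a) hC₂) hPa) hPb
  have hK₃0 : 0 < K₃ := by
    rw [hK₃]
    exact mul_pos (mul_pos (mul_pos hc₀a hκb) hQ) hC₃
  clear_value ε
  set K := K₁ + K₂ + 2*K₃ with hKdef
  have hK0 : 0 < K := by rw [hKdef]; linarith
  have hPe0 : 0 < (Real.pi/2) ^ ((d:ℝ) - a₁ - b₁) := rpow_pos_of_pos hP0 _
  clear_value c₀ κ K₁ K₂ K₃ K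
  refine ⟨K * ((Real.pi/2) ^ ((d:ℝ) - a₁ - b₁))⁻¹, mul_pos hK0 (inv_pos.mpr hPe0), ?_⟩
  intro L hL x
  have hL0 : (0:ℝ) < L := by linarith
  have hmd : ∀ t : ℝ, max (t / L) 1 = max t L / L := fun t => by
    rw [← max_div_div_right hL0.le t L, div_self (ne_of_gt hL0)]
  simp only [vee, hmd, ← mul_div_assoc]
  set A := max (nrm d x) L with hAdef
  have hLA : L ≤ A := le_max_right _ _
  have hA0 : 0 < A := lt_of_lt_of_le hL0 hLA
  have hA1 : (1:ℝ) ≤ A := le_trans hL hLA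
  have hxA : nrm d x ≤ A := le_max_left _ _
  set lx := Real.log (Real.pi/2 * A / L) with hlxdef
  have hlx0 : 0 < lx := ConvAux.log_lower_pos hL hLA
  have hlxn : 0 ≤ lx ^ (-b₂) := rpow_nonneg hlx0.le _
  have hmax0 : ∀ z : Fin d → ℤ, 0 < max (nrm d z) L :=
    fun z => lt_of_lt_of_le hL0 (le_max_right _ _)
  have hlg0 : ∀ z : Fin d → ℤ, 0 < Real.log (Real.pi/2 * max (nrm d z) L / L) :=
    fun z => ConvAux.log_lower_pos hL (le_max_right _ _)
  have hnn : ∀ z : Fin d → ℤ, 0 ≤ nrm d z := fun z => ConvAux.nrm_nonneg z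
  have hnu : ∀ z : Fin d → ℤ, (ConvAux.nu z : ℝ) ≤ nrm d z := ConvAux.nu_le_nrm hd
  have hPA0 : 0 < Real.pi/2 * A := mul_pos hP0 hA0
  clear_value A lx
  set Φ := A ^ ((d:ℝ) - a₁ - b₁) * lx ^ (-b₂) with hΦdef
  have hΦ0 : 0 ≤ Φ := by
    rw [hΦdef]
    exact mul_nonneg (rpow_nonneg hA0.le _) hlxn
  -- the right-hand side equals K * Φ
  have hRHS : K * ((Real.pi/2) ^ ((d:ℝ) - a₁ - b₁))⁻¹ * (Real.pi/2 * A) ^ ((d:ℝ) - a₁) *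
      ((Real.pi/2 * A) ^ (-b₁) * lx ^ (-b₂)) = K * Φ := by
    have h1 : (Real.pi/2 * A) ^ ((d:ℝ) - a₁) * (Real.pi/2 * A) ^ (-b₁)
        = (Real.pi/2) ^ ((d:ℝ) - a₁ - b₁) * A ^ ((d:ℝ) - a₁ - b₁) := by
      rw [← rpow_add hPA0, show (d:ℝ) - a₁ + -b₁ = (d:ℝ) - a₁ - b₁ from by ring,
        mul_rpow hP0.le hA0.le]
    calc K * ((Real.pi/2) ^ ((d:ℝ) - a₁ - b₁))⁻¹ * (Real.pi/2 * A) ^ ((d:ℝ) - a₁) *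
        ((Real.pi/2 * A) ^ (-b₁) * lx ^ (-b₂))
        = K * ((Real.pi/2) ^ ((d:ℝ) - a₁ - b₁))⁻¹ *
          ((Real.pi/2 * A) ^ ((d:ℝ) - a₁) * (Real.pi/2 * A) ^ (-b₁)) * lx ^ (-b₂) := by
          ring
    _ = K * Φ := by
          rw [h1, hΦdef]
          field_simp
  rw [hRHS]
  apply tsum_le_of_sum_le' (mul_nonneg hK0.le hΦ0)
  intro F
  rw [← Finset.sum_filter_add_sum_filter_not F (fun y => 2 * nrm d y ≤ nrm d x)]
  rw [← Finset.sum_filter_add_sum_filter_not (F.filter (fun y => ¬ (2 * nrm d y ≤ nrm d x)))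
    (fun y => 2 * nrm d (x - y) ≤ nrm d x)]
  rw [← Finset.sum_filter_add_sum_filter_not ((F.filter (fun y => ¬ (2 * nrm d y ≤ nrm d x))).filter
    (fun y => ¬ (2 * nrm d (x - y) ≤ nrm d x))) (fun y => nrm d y ≤ nrm d (x - y))]
  set F₁ := F.filter (fun y => 2 * nrm d y ≤ nrm d x) with hF₁
  set G := F.filter (fun y => ¬ (2 * nrm d y ≤ nrm d x)) with hG
  set F₂ := G.filter (fun y => 2 * nrm d (x - y) ≤ nrm d x) with hF₂
  set F₃ := G.filter (fun y => ¬ (2 * nrm d (x - y) ≤ nrm d x)) with hF₃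
  set F₃a := F₃.filter (fun y => nrm d y ≤ nrm d (x - y)) with hF₃a
  set F₃b := F₃.filter (fun y => ¬ (nrm d y ≤ nrm d (x - y))) with hF₃b
  clear_value Φ F₁ G F₂ F₃ F₃a F₃b
  -- common positivity helpers
  have hmypos : ∀ z : Fin d → ℤ, 0 < Real.pi/2 * max (nrm d z) L :=
    fun z => mul_pos hP0 (hmax0 z)
  have hnuA0 : ∀ z : Fin d → ℤ, 0 < max (ConvAux.nu z : ℝ) A :=
    fun z => lt_of_lt_of_le hA0 (le_max_right _ _)
  have hnuL0 : ∀ z : Fin d → ℤ, 0 < max (ConvAux.nu z : ℝ) L :=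
    fun z => lt_of_lt_of_le hL0 (le_max_right _ _)
  have hQbase : (0:ℝ) < 2/(Real.pi/2) := by positivity
  have hcancel : ∀ m : ℝ, (2/(Real.pi/2)) * (Real.pi/2 * m) = 2 * m := fun m => by
    field_simp
  -- Region 1
  have hmemA : ∀ y ∈ F₁, (ConvAux.nu y : ℝ) ≤ A := by
    intro y hy
    rw [hF₁] at hy
    have h1 : 2 * nrm d y ≤ nrm d x := (Finset.mem_filter.mp hy).2
    have h2 := hnn y
    have h3 := hnu y
    linarith [hxA]
  have hJ1 : (∑ y ∈ F₁, (Real.pi / 2 * (nrm d (x - y) ⊔ L)) ^ (-a₁) *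
      Real.log (Real.pi / 2 * (nrm d (x - y) ⊔ L) / L) ^ (-a₂) *
      ((Real.pi / 2 * (nrm d y ⊔ L)) ^ (-b₁) *
        Real.log (Real.pi / 2 * (nrm d y ⊔ L) / L) ^ (-b₂))) ≤ K₁ * Φ := by
    set D := 2^a₁ * c₀^(-a₂) * C₄ * (Real.pi/2)^(-a₁) * (Real.pi/2)^(-b₁) * A^(-a₁) * A^ε
      * lx^(-b₂) with hD
    have hD0 : 0 ≤ D := by
      rw [hD]
      have h5 : 0 < A^(-a₁) := rpow_pos_of_pos hA0 _
      have h6 : 0 < A^ε := rpow_pos_of_pos hA0 _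
      have h7 : 0 < lx^(-b₂) := rpow_pos_of_pos hlx0 _
      exact le_of_lt (mul_pos (mul_pos (mul_pos (mul_pos (mul_pos (mul_pos
        (mul_pos h2a hc₀a) hC₄) hPa) hPb) h5) h6) h7)
    have hpt : ∀ y ∈ F₁, (Real.pi / 2 * (nrm d (x - y) ⊔ L)) ^ (-a₁) *
        Real.log (Real.pi / 2 * (nrm d (x - y) ⊔ L) / L) ^ (-a₂) *
        ((Real.pi / 2 * (nrm d y ⊔ L)) ^ (-b₁) *
          Real.log (Real.pi / 2 * (nrm d y ⊔ L) / L) ^ (-b₂))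
        ≤ D * (max (ConvAux.nu y : ℝ) L) ^ (-(b₁+ε)) := by
      intro y hy
      rw [hF₁] at hy
      have hy1 : 2 * nrm d y ≤ nrm d x := (Finset.mem_filter.mp hy).2
      have hny := hnn y
      have hyx : nrm d y ≤ nrm d x := by linarith
      have hmyA : max (nrm d y) L ≤ A := by
        rw [hAdef]
        exact max_le_max hyx le_rfl
      have hzx : nrm d x ≤ 2 * nrm d (x - y) := by
        have h := ConvAux.nrm_sub_nrm_le x y
        linarith
      have hA2 : A ≤ 2 * max (nrm d (x - y)) L := by
        rw [hAdef]
        apply max_le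
        · linarith [le_max_left (nrm d (x - y)) L]
        · linarith [le_max_right (nrm d (x - y)) L]
      have hmy0 := hmax0 y
      have hmz0 := hmax0 (x - y)
      have hT1 : (Real.pi/2 * max (nrm d (x-y)) L) ^ (-a₁) ≤ 2^a₁ * (Real.pi/2*A)^(-a₁) := by
        apply ConvAux.pull_neg hPA0 two_pos _ ha₁0.le
        calc Real.pi/2*A ≤ Real.pi/2*(2 * max (nrm d (x-y)) L) :=
              mul_le_mul_of_nonneg_left hA2 hP0.le
        _ = 2*(Real.pi/2 * max (nrm d (x-y)) L) := by ring
      have hT2 : Real.log (Real.pi/2 * max (nrm d (x-y)) L / L) ^ (-a₂) ≤ c₀ ^ (-a₂) := by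
        rw [hc₀def]
        exact ConvAux.drop_log hL (le_max_right _ _) ha₂
      have hT4 : Real.log (Real.pi/2 * max (nrm d y) L / L) ^ (-b₂)
          ≤ C₄ * (A / max (nrm d y) L) ^ ε * lx ^ (-b₂) := by
        rw [hlxdef]
        exact H₄ L (max (nrm d y) L) A hL (le_max_right _ _) hmyA
      have hn2 : 0 ≤ Real.log (Real.pi/2 * max (nrm d (x-y)) L / L) ^ (-a₂) :=
        rpow_nonneg (hlg0 (x-y)).le _
      have hn3 : 0 ≤ (Real.pi/2 * max (nrm d y) L) ^ (-b₁) :=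
        rpow_nonneg (hmypos y).le _
      have hn4 : 0 ≤ Real.log (Real.pi/2 * max (nrm d y) L / L) ^ (-b₂) :=
        rpow_nonneg (hlg0 y).le _
      have hnB1 : 0 ≤ 2^a₁ * (Real.pi/2*A)^(-a₁) :=
        le_of_lt (mul_pos h2a (rpow_pos_of_pos hPA0 _))
      calc (Real.pi / 2 * (nrm d (x - y) ⊔ L)) ^ (-a₁) *
          Real.log (Real.pi / 2 * (nrm d (x - y) ⊔ L) / L) ^ (-a₂) *
          ((Real.pi / 2 * (nrm d y ⊔ L)) ^ (-b₁) *
            Real.log (Real.pi / 2 * (nrm d y ⊔ L) / L) ^ (-b₂))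
          ≤ (2^a₁ * (Real.pi/2*A)^(-a₁)) * c₀^(-a₂) *
            ((Real.pi/2 * max (nrm d y) L)^(-b₁) *
              (C₄ * (A / max (nrm d y) L)^ε * lx^(-b₂))) := by
            apply mul_le_mul (mul_le_mul hT1 hT2 hn2 hnB1)
              (mul_le_mul_of_nonneg_left hT4 hn3)
              (mul_nonneg hn3 hn4) (mul_nonneg hnB1 hc₀a.le)
      _ = D * (max (nrm d y) L) ^ (-(b₁+ε)) := by
            rw [hD, mul_rpow hP0.le hA0.le, mul_rpow hP0.le hmy0.le,
              div_rpow hA0.le hmy0.le, div_eq_mul_inv (A^ε), ← rpow_neg hmy0.le,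
              show -(b₁+ε) = -b₁ + -ε from by ring, rpow_add hmy0]
            ring
      _ ≤ D * (max (ConvAux.nu y : ℝ) L) ^ (-(b₁+ε)) := by
            apply mul_le_mul_of_nonneg_left _ hD0
            exact rpow_le_rpow_of_nonpos (hnuL0 y) (max_le_max (hnu y) le_rfl) (by linarith)
    calc (∑ y ∈ F₁, (Real.pi / 2 * (nrm d (x - y) ⊔ L)) ^ (-a₁) *
        Real.log (Real.pi / 2 * (nrm d (x - y) ⊔ L) / L) ^ (-a₂) *
        ((Real.pi / 2 * (nrm d y ⊔ L)) ^ (-b₁) *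
          Real.log (Real.pi / 2 * (nrm d y ⊔ L) / L) ^ (-b₂)))
        ≤ ∑ y ∈ F₁, D * (max (ConvAux.nu y : ℝ) L) ^ (-(b₁+ε)) := Finset.sum_le_sum hpt
    _ = D * ∑ y ∈ F₁, (max (ConvAux.nu y : ℝ) L) ^ (-(b₁+ε)) := by rw [Finset.mul_sum]
    _ ≤ D * (C₁ * A ^ ((d:ℝ) - (b₁+ε))) :=
        mul_le_mul_of_nonneg_left (H₁ L hL A hLA F₁ hmemA) hD0
    _ = K₁ * Φ := by
        have hcol : A^(-a₁) * A^ε * A^((d:ℝ)-(b₁+ε)) = A^((d:ℝ)-a₁-b₁) := by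
          rw [← rpow_add hA0, ← rpow_add hA0]
          congr 1
          ring
        rw [hD, hK₁, hΦdef, ← hcol]
        ring
  -- Region 2
  have hJ2 : (∑ y ∈ F₂, (Real.pi / 2 * (nrm d (x - y) ⊔ L)) ^ (-a₁) *
      Real.log (Real.pi / 2 * (nrm d (x - y) ⊔ L) / L) ^ (-a₂) *
      ((Real.pi / 2 * (nrm d y ⊔ L)) ^ (-b₁) *
        Real.log (Real.pi / 2 * (nrm d y ⊔ L) / L) ^ (-b₂))) ≤ K₂ * Φ := by
    set D := 2^b₁ * κ^b₂ * c₀^(-a₂) * (Real.pi/2)^(-a₁) * (Real.pi/2)^(-b₁) * A^(-b₁)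
      * lx^(-b₂) with hD
    have hD0 : 0 ≤ D := by
      rw [hD]
      have h5 : 0 < A^(-b₁) := rpow_pos_of_pos hA0 _
      have h7 : 0 < lx^(-b₂) := rpow_pos_of_pos hlx0 _
      exact le_of_lt (mul_pos (mul_pos (mul_pos (mul_pos (mul_pos
        (mul_pos h2b hκb) hc₀a) hPa) hPb) h5) h7)
    have hpt : ∀ y ∈ F₂, (Real.pi / 2 * (nrm d (x - y) ⊔ L)) ^ (-a₁) *
        Real.log (Real.pi / 2 * (nrm d (x - y) ⊔ L) / L) ^ (-a₂) *
        ((Real.pi / 2 * (nrm d y ⊔ L)) ^ (-b₁) *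
          Real.log (Real.pi / 2 * (nrm d y ⊔ L) / L) ^ (-b₂))
        ≤ D * (max (ConvAux.nu (x - y) : ℝ) L) ^ (-a₁) := by
      intro y hy
      rw [hF₂, hG] at hy
      have hy2 : 2 * nrm d (x - y) ≤ nrm d x := (Finset.mem_filter.mp hy).2
      have hy1 : nrm d x < 2 * nrm d y :=
        not_le.mp ((Finset.mem_filter.mp ((Finset.mem_filter.mp hy).1)).2)
      have hny := hnn y
      have hnz := hnn (x - y)
      have hmy0 := hmax0 y
      have hmz0 := hmax0 (x - y)
      have hA2y : A ≤ 2 * max (nrm d y) L := by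
        rw [hAdef]
        apply max_le
        · linarith [le_max_left (nrm d y) L]
        · linarith [le_max_right (nrm d y) L]
      have hT3 : (Real.pi/2 * max (nrm d y) L) ^ (-b₁) ≤ 2^b₁ * (Real.pi/2*A)^(-b₁) := by
        apply ConvAux.pull_neg hPA0 two_pos _ hb₁.le
        calc Real.pi/2*A ≤ Real.pi/2*(2 * max (nrm d y) L) :=
              mul_le_mul_of_nonneg_left hA2y hP0.le
        _ = 2*(Real.pi/2 * max (nrm d y) L) := by ring
      have hT4 : Real.log (Real.pi/2 * max (nrm d y) L / L) ^ (-b₂) ≤ κ^b₂ * lx^(-b₂) := by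
        apply ConvAux.pull_neg hlx0 hκ0 _ hb₂
        rw [hlxdef, hκdef, hc₀def]
        exact ConvAux.log_upper hL hLA (le_max_right _ _) hA2y
      have hT1 : (Real.pi/2 * max (nrm d (x-y)) L) ^ (-a₁)
          ≤ (Real.pi/2)^(-a₁) * (max (ConvAux.nu (x - y) : ℝ) L)^(-a₁) := by
        have h1 : (Real.pi/2 * max (nrm d (x-y)) L)^(-a₁)
            ≤ (Real.pi/2 * max (ConvAux.nu (x - y) : ℝ) L)^(-a₁) :=
          rpow_le_rpow_of_nonpos (mul_pos hP0 (hnuL0 (x - y)))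
            (mul_le_mul_of_nonneg_left (max_le_max (hnu (x-y)) le_rfl) hP0.le)
            (neg_nonpos.mpr ha₁0.le)
        rwa [mul_rpow hP0.le (hnuL0 (x - y)).le] at h1
      have hT2 : Real.log (Real.pi/2 * max (nrm d (x-y)) L / L) ^ (-a₂) ≤ c₀ ^ (-a₂) := by
        rw [hc₀def]
        exact ConvAux.drop_log hL (le_max_right _ _) ha₂
      have hn2 : 0 ≤ Real.log (Real.pi/2 * max (nrm d (x-y)) L / L) ^ (-a₂) :=
        rpow_nonneg (hlg0 (x-y)).le _
      have hn3 : 0 ≤ (Real.pi/2 * max (nrm d y) L) ^ (-b₁) :=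
        rpow_nonneg (hmypos y).le _
      have hn4 : 0 ≤ Real.log (Real.pi/2 * max (nrm d y) L / L) ^ (-b₂) :=
        rpow_nonneg (hlg0 y).le _
      have hnB1 : 0 ≤ (Real.pi/2)^(-a₁) * (max (ConvAux.nu (x - y) : ℝ) L)^(-a₁) :=
        le_of_lt (mul_pos hPa (rpow_pos_of_pos (hnuL0 (x - y)) _))
      calc (Real.pi / 2 * (nrm d (x - y) ⊔ L)) ^ (-a₁) *
          Real.log (Real.pi / 2 * (nrm d (x - y) ⊔ L) / L) ^ (-a₂) *
          ((Real.pi / 2 * (nrm d y ⊔ L)) ^ (-b₁) *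
            Real.log (Real.pi / 2 * (nrm d y ⊔ L) / L) ^ (-b₂))
          ≤ ((Real.pi/2)^(-a₁) * (max (ConvAux.nu (x - y) : ℝ) L)^(-a₁)) * c₀^(-a₂) *
            ((2^b₁ * (Real.pi/2*A)^(-b₁)) * (κ^b₂ * lx^(-b₂))) := by
            apply mul_le_mul (mul_le_mul hT1 hT2 hn2 hnB1)
              (mul_le_mul hT3 hT4 hn4 (le_of_lt (mul_pos h2b (rpow_pos_of_pos hPA0 _))))
              (mul_nonneg hn3 hn4) (mul_nonneg hnB1 hc₀a.le)
      _ = D * (max (ConvAux.nu (x - y) : ℝ) L) ^ (-a₁) := by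
            rw [hD, mul_rpow hP0.le hA0.le]
            ring
    calc (∑ y ∈ F₂, (Real.pi / 2 * (nrm d (x - y) ⊔ L)) ^ (-a₁) *
        Real.log (Real.pi / 2 * (nrm d (x - y) ⊔ L) / L) ^ (-a₂) *
        ((Real.pi / 2 * (nrm d y ⊔ L)) ^ (-b₁) *
          Real.log (Real.pi / 2 * (nrm d y ⊔ L) / L) ^ (-b₂)))
        ≤ ∑ y ∈ F₂, D * (max (ConvAux.nu (x - y) : ℝ) L) ^ (-a₁) := Finset.sum_le_sum hpt
    _ = D * ∑ y ∈ F₂, (max (ConvAux.nu (x - y) : ℝ) L) ^ (-a₁) := by rw [Finset.mul_sum]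
    _ = D * ∑ z ∈ F₂.image (fun y => x - y), (max (ConvAux.nu z : ℝ) L) ^ (-a₁) := by
        rw [Finset.sum_image (fun y₁ _ y₂ _ h => sub_right_injective h)]
    _ ≤ D * (C₂ * A ^ ((d:ℝ) - a₁)) := by
        apply mul_le_mul_of_nonneg_left _ hD0
        apply H₂ L hL A hLA
        intro z hz
        obtain ⟨y, hyF, rfl⟩ := Finset.mem_image.mp hz
        rw [hF₂] at hyF
        have hy2 : 2 * nrm d (x - y) ≤ nrm d x := (Finset.mem_filter.mp hyF).2
        have := hnu (x - y)
        have := hnn (x - y)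
        linarith [hxA]
    _ = K₂ * Φ := by
        have hcol : A^(-b₁) * A^((d:ℝ)-a₁) = A^((d:ℝ)-a₁-b₁) := by
          rw [← rpow_add hA0]
          congr 1
          ring
        rw [hD, hK₂, hΦdef, ← hcol]
        ring
  -- Region 3a
  have hJ3a : (∑ y ∈ F₃a, (Real.pi / 2 * (nrm d (x - y) ⊔ L)) ^ (-a₁) *
      Real.log (Real.pi / 2 * (nrm d (x - y) ⊔ L) / L) ^ (-a₂) *
      ((Real.pi / 2 * (nrm d y ⊔ L)) ^ (-b₁) *
        Real.log (Real.pi / 2 * (nrm d y ⊔ L) / L) ^ (-b₂))) ≤ K₃ * Φ := by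
    set D := c₀^(-a₂) * κ^b₂ * (2/(Real.pi/2))^(a₁+b₁) * lx^(-b₂) with hD
    have hD0 : 0 ≤ D := by
      rw [hD]
      have h7 : 0 < lx^(-b₂) := rpow_pos_of_pos hlx0 _
      exact le_of_lt (mul_pos (mul_pos (mul_pos hc₀a hκb) hQ) h7)
    have hpt : ∀ y ∈ F₃a, (Real.pi / 2 * (nrm d (x - y) ⊔ L)) ^ (-a₁) *
        Real.log (Real.pi / 2 * (nrm d (x - y) ⊔ L) / L) ^ (-a₂) *
        ((Real.pi / 2 * (nrm d y ⊔ L)) ^ (-b₁) *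
          Real.log (Real.pi / 2 * (nrm d y ⊔ L) / L) ^ (-b₂))
        ≤ D * (max (ConvAux.nu y : ℝ) A) ^ (-(a₁+b₁)) := by
      intro y hy
      rw [hF₃a, hF₃, hG] at hy
      have hy3 : nrm d y ≤ nrm d (x - y) := (Finset.mem_filter.mp hy).2
      have hyF₃ := (Finset.mem_filter.mp hy).1
      have hy1 : nrm d x < 2 * nrm d y :=
        not_le.mp ((Finset.mem_filter.mp ((Finset.mem_filter.mp hyF₃).1)).2)
      have hny := hnn y
      have hmy0 := hmax0 y
      have hmz0 := hmax0 (x - y)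
      have hA2y : A ≤ 2 * max (nrm d y) L := by
        rw [hAdef]
        apply max_le
        · linarith [le_max_left (nrm d y) L]
        · linarith [le_max_right (nrm d y) L]
      have hT1 : (Real.pi/2 * max (nrm d (x-y)) L) ^ (-a₁)
          ≤ (Real.pi/2 * max (nrm d y) L) ^ (-a₁) :=
        rpow_le_rpow_of_nonpos (mul_pos hP0 hmy0)
          (mul_le_mul_of_nonneg_left (max_le_max hy3 le_rfl) hP0.le)
          (neg_nonpos.mpr ha₁0.le)
      have hT2 : Real.log (Real.pi/2 * max (nrm d (x-y)) L / L) ^ (-a₂) ≤ c₀ ^ (-a₂) := by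
        rw [hc₀def]
        exact ConvAux.drop_log hL (le_max_right _ _) ha₂
      have hT4 : Real.log (Real.pi/2 * max (nrm d y) L / L) ^ (-b₂) ≤ κ^b₂ * lx^(-b₂) := by
        apply ConvAux.pull_neg hlx0 hκ0 _ hb₂
        rw [hlxdef, hκdef, hc₀def]
        exact ConvAux.log_upper hL hLA (le_max_right _ _) hA2y
      have hn2 : 0 ≤ Real.log (Real.pi/2 * max (nrm d (x-y)) L / L) ^ (-a₂) :=
        rpow_nonneg (hlg0 (x-y)).le _
      have hn3 : 0 ≤ (Real.pi/2 * max (nrm d y) L) ^ (-b₁) :=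
        rpow_nonneg (hmypos y).le _
      have hn4 : 0 ≤ Real.log (Real.pi/2 * max (nrm d y) L / L) ^ (-b₂) :=
        rpow_nonneg (hlg0 y).le _
      have hnB1 : 0 ≤ (Real.pi/2 * max (nrm d y) L) ^ (-a₁) :=
        rpow_nonneg (hmypos y).le _
      have hpull : (Real.pi/2 * max (nrm d y) L) ^ (-(a₁+b₁))
          ≤ (2/(Real.pi/2))^(a₁+b₁) * (max (ConvAux.nu y : ℝ) A)^(-(a₁+b₁)) := by
        apply ConvAux.pull_neg (hnuA0 y) hQbase _ (by linarith)
        rw [hcancel]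
        apply max_le
        · have h1 := hnu y
          have h2 := le_max_left (nrm d y) L
          linarith
        · exact hA2y
      calc (Real.pi / 2 * (nrm d (x - y) ⊔ L)) ^ (-a₁) *
          Real.log (Real.pi / 2 * (nrm d (x - y) ⊔ L) / L) ^ (-a₂) *
          ((Real.pi / 2 * (nrm d y ⊔ L)) ^ (-b₁) *
            Real.log (Real.pi / 2 * (nrm d y ⊔ L) / L) ^ (-b₂))
          ≤ ((Real.pi/2 * max (nrm d y) L) ^ (-a₁)) * c₀^(-a₂) *
            (((Real.pi/2 * max (nrm d y) L)) ^ (-b₁) * (κ^b₂ * lx^(-b₂))) := by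
            apply mul_le_mul (mul_le_mul hT1 hT2 hn2 hnB1)
              (mul_le_mul_of_nonneg_left hT4 hn3)
              (mul_nonneg hn3 hn4) (mul_nonneg hnB1 hc₀a.le)
      _ = (c₀^(-a₂) * κ^b₂ * lx^(-b₂)) * (Real.pi/2 * max (nrm d y) L) ^ (-(a₁+b₁)) := by
            rw [show -(a₁+b₁) = -a₁ + -b₁ from by ring, rpow_add (hmypos y)]
            ring
      _ ≤ (c₀^(-a₂) * κ^b₂ * lx^(-b₂)) *
            ((2/(Real.pi/2))^(a₁+b₁) * (max (ConvAux.nu y : ℝ) A)^(-(a₁+b₁))) := by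
            apply mul_le_mul_of_nonneg_left hpull
            exact mul_nonneg (mul_nonneg hc₀a.le hκb.le) (rpow_nonneg hlx0.le _)
      _ = D * (max (ConvAux.nu y : ℝ) A) ^ (-(a₁+b₁)) := by
            rw [hD]
            ring
    calc (∑ y ∈ F₃a, (Real.pi / 2 * (nrm d (x - y) ⊔ L)) ^ (-a₁) *
        Real.log (Real.pi / 2 * (nrm d (x - y) ⊔ L) / L) ^ (-a₂) *
        ((Real.pi / 2 * (nrm d y ⊔ L)) ^ (-b₁) *
          Real.log (Real.pi / 2 * (nrm d y ⊔ L) / L) ^ (-b₂)))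
        ≤ ∑ y ∈ F₃a, D * (max (ConvAux.nu y : ℝ) A) ^ (-(a₁+b₁)) := Finset.sum_le_sum hpt
    _ = D * ∑ y ∈ F₃a, (max (ConvAux.nu y : ℝ) A) ^ (-(a₁+b₁)) := by rw [Finset.mul_sum]
    _ ≤ D * (C₃ * A ^ ((d:ℝ) - (a₁+b₁))) :=
        mul_le_mul_of_nonneg_left (H₃ A hA1 F₃a) hD0
    _ = K₃ * Φ := by
        rw [hD, hK₃, hΦdef, show (d:ℝ) - (a₁+b₁) = (d:ℝ) - a₁ - b₁ from by ring]
        ring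
  -- Region 3b
  have hJ3b : (∑ y ∈ F₃b, (Real.pi / 2 * (nrm d (x - y) ⊔ L)) ^ (-a₁) *
      Real.log (Real.pi / 2 * (nrm d (x - y) ⊔ L) / L) ^ (-a₂) *
      ((Real.pi / 2 * (nrm d y ⊔ L)) ^ (-b₁) *
        Real.log (Real.pi / 2 * (nrm d y ⊔ L) / L) ^ (-b₂))) ≤ K₃ * Φ := by
    set D := c₀^(-a₂) * κ^b₂ * (2/(Real.pi/2))^(a₁+b₁) * lx^(-b₂) with hD
    have hD0 : 0 ≤ D := by
      rw [hD]
      have h7 : 0 < lx^(-b₂) := rpow_pos_of_pos hlx0 _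
      exact le_of_lt (mul_pos (mul_pos (mul_pos hc₀a hκb) hQ) h7)
    have hpt : ∀ y ∈ F₃b, (Real.pi / 2 * (nrm d (x - y) ⊔ L)) ^ (-a₁) *
        Real.log (Real.pi / 2 * (nrm d (x - y) ⊔ L) / L) ^ (-a₂) *
        ((Real.pi / 2 * (nrm d y ⊔ L)) ^ (-b₁) *
          Real.log (Real.pi / 2 * (nrm d y ⊔ L) / L) ^ (-b₂))
        ≤ D * (max (ConvAux.nu (x - y) : ℝ) A) ^ (-(a₁+b₁)) := by
      intro y hy
      rw [hF₃b, hF₃, hG] at hy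
      have hy3 : nrm d (x - y) ≤ nrm d y :=
        le_of_lt (not_le.mp ((Finset.mem_filter.mp hy).2))
      have hyF₃ := (Finset.mem_filter.mp hy).1
      have hy2 : nrm d x < 2 * nrm d (x - y) :=
        not_le.mp ((Finset.mem_filter.mp hyF₃).2)
      have hy1 : nrm d x < 2 * nrm d y :=
        not_le.mp ((Finset.mem_filter.mp ((Finset.mem_filter.mp hyF₃).1)).2)
      have hny := hnn y
      have hnz := hnn (x - y)
      have hmy0 := hmax0 y
      have hmz0 := hmax0 (x - y)
      have hA2y : A ≤ 2 * max (nrm d y) L := by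
        rw [hAdef]
        apply max_le
        · linarith [le_max_left (nrm d y) L]
        · linarith [le_max_right (nrm d y) L]
      have hA2z : A ≤ 2 * max (nrm d (x - y)) L := by
        rw [hAdef]
        apply max_le
        · linarith [le_max_left (nrm d (x - y)) L]
        · linarith [le_max_right (nrm d (x - y)) L]
      have hT3 : (Real.pi/2 * max (nrm d y) L) ^ (-b₁)
          ≤ (Real.pi/2 * max (nrm d (x - y)) L) ^ (-b₁) :=
        rpow_le_rpow_of_nonpos (mul_pos hP0 hmz0)
          (mul_le_mul_of_nonneg_left (max_le_max hy3 le_rfl) hP0.le)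
          (neg_nonpos.mpr hb₁.le)
      have hT2 : Real.log (Real.pi/2 * max (nrm d (x-y)) L / L) ^ (-a₂) ≤ c₀ ^ (-a₂) := by
        rw [hc₀def]
        exact ConvAux.drop_log hL (le_max_right _ _) ha₂
      have hT4 : Real.log (Real.pi/2 * max (nrm d y) L / L) ^ (-b₂) ≤ κ^b₂ * lx^(-b₂) := by
        apply ConvAux.pull_neg hlx0 hκ0 _ hb₂
        rw [hlxdef, hκdef, hc₀def]
        exact ConvAux.log_upper hL hLA (le_max_right _ _) hA2y
      have hn1 : 0 ≤ (Real.pi/2 * max (nrm d (x - y)) L) ^ (-a₁) :=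
        rpow_nonneg (hmypos (x - y)).le _
      have hn2 : 0 ≤ Real.log (Real.pi/2 * max (nrm d (x-y)) L / L) ^ (-a₂) :=
        rpow_nonneg (hlg0 (x-y)).le _
      have hn3 : 0 ≤ (Real.pi/2 * max (nrm d y) L) ^ (-b₁) :=
        rpow_nonneg (hmypos y).le _
      have hn4 : 0 ≤ Real.log (Real.pi/2 * max (nrm d y) L / L) ^ (-b₂) :=
        rpow_nonneg (hlg0 y).le _
      have hpull : (Real.pi/2 * max (nrm d (x - y)) L) ^ (-(a₁+b₁))
          ≤ (2/(Real.pi/2))^(a₁+b₁) * (max (ConvAux.nu (x - y) : ℝ) A)^(-(a₁+b₁)) := by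
        apply ConvAux.pull_neg (hnuA0 (x - y)) hQbase _ (by linarith)
        rw [hcancel]
        apply max_le
        · have h1 := hnu (x - y)
          have h2 := le_max_left (nrm d (x - y)) L
          linarith
        · exact hA2z
      calc (Real.pi / 2 * (nrm d (x - y) ⊔ L)) ^ (-a₁) *
          Real.log (Real.pi / 2 * (nrm d (x - y) ⊔ L) / L) ^ (-a₂) *
          ((Real.pi / 2 * (nrm d y ⊔ L)) ^ (-b₁) *
            Real.log (Real.pi / 2 * (nrm d y ⊔ L) / L) ^ (-b₂))
          ≤ ((Real.pi/2 * max (nrm d (x - y)) L) ^ (-a₁)) * c₀^(-a₂) *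
            (((Real.pi/2 * max (nrm d (x - y)) L)) ^ (-b₁) * (κ^b₂ * lx^(-b₂))) := by
            apply mul_le_mul (mul_le_mul le_rfl hT2 hn2 hn1)
              (mul_le_mul hT3 hT4 hn4 (rpow_nonneg (hmypos (x - y)).le _))
              (mul_nonneg hn3 hn4) (mul_nonneg hn1 hc₀a.le)
      _ = (c₀^(-a₂) * κ^b₂ * lx^(-b₂)) * (Real.pi/2 * max (nrm d (x - y)) L) ^ (-(a₁+b₁)) := by
            rw [show -(a₁+b₁) = -a₁ + -b₁ from by ring, rpow_add (hmypos (x - y))]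
            ring
      _ ≤ (c₀^(-a₂) * κ^b₂ * lx^(-b₂)) *
            ((2/(Real.pi/2))^(a₁+b₁) * (max (ConvAux.nu (x - y) : ℝ) A)^(-(a₁+b₁))) := by
            apply mul_le_mul_of_nonneg_left hpull
            exact mul_nonneg (mul_nonneg hc₀a.le hκb.le) (rpow_nonneg hlx0.le _)
      _ = D * (max (ConvAux.nu (x - y) : ℝ) A) ^ (-(a₁+b₁)) := by
            rw [hD]
            ring
    calc (∑ y ∈ F₃b, (Real.pi / 2 * (nrm d (x - y) ⊔ L)) ^ (-a₁) *
        Real.log (Real.pi / 2 * (nrm d (x - y) ⊔ L) / L) ^ (-a₂) *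
        ((Real.pi / 2 * (nrm d y ⊔ L)) ^ (-b₁) *
          Real.log (Real.pi / 2 * (nrm d y ⊔ L) / L) ^ (-b₂)))
        ≤ ∑ y ∈ F₃b, D * (max (ConvAux.nu (x - y) : ℝ) A) ^ (-(a₁+b₁)) := Finset.sum_le_sum hpt
    _ = D * ∑ y ∈ F₃b, (max (ConvAux.nu (x - y) : ℝ) A) ^ (-(a₁+b₁)) := by rw [Finset.mul_sum]
    _ = D * ∑ z ∈ F₃b.image (fun y => x - y), (max (ConvAux.nu z : ℝ) A) ^ (-(a₁+b₁)) := by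
        rw [Finset.sum_image (fun y₁ _ y₂ _ h => sub_right_injective h)]
    _ ≤ D * (C₃ * A ^ ((d:ℝ) - (a₁+b₁))) :=
        mul_le_mul_of_nonneg_left (H₃ A hA1 _) hD0
    _ = K₃ * Φ := by
        rw [hD, hK₃, hΦdef, show (d:ℝ) - (a₁+b₁) = (d:ℝ) - a₁ - b₁ from by ring]
        ring
  calc (∑ y ∈ F₁, (Real.pi / 2 * (nrm d (x - y) ⊔ L)) ^ (-a₁) *
      Real.log (Real.pi / 2 * (nrm d (x - y) ⊔ L) / L) ^ (-a₂) *
      ((Real.pi / 2 * (nrm d y ⊔ L)) ^ (-b₁) *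
        Real.log (Real.pi / 2 * (nrm d y ⊔ L) / L) ^ (-b₂))) +
      ((∑ y ∈ F₂, (Real.pi / 2 * (nrm d (x - y) ⊔ L)) ^ (-a₁) *
      Real.log (Real.pi / 2 * (nrm d (x - y) ⊔ L) / L) ^ (-a₂) *
      ((Real.pi / 2 * (nrm d y ⊔ L)) ^ (-b₁) *
        Real.log (Real.pi / 2 * (nrm d y ⊔ L) / L) ^ (-b₂))) +
      ((∑ y ∈ F₃a, (Real.pi / 2 * (nrm d (x - y) ⊔ L)) ^ (-a₁) *
      Real.log (Real.pi / 2 * (nrm d (x - y) ⊔ L) / L) ^ (-a₂) *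
      ((Real.pi / 2 * (nrm d y ⊔ L)) ^ (-b₁) *
        Real.log (Real.pi / 2 * (nrm d y ⊔ L) / L) ^ (-b₂))) +
      (∑ y ∈ F₃b, (Real.pi / 2 * (nrm d (x - y) ⊔ L)) ^ (-a₁) *
      Real.log (Real.pi / 2 * (nrm d (x - y) ⊔ L) / L) ^ (-a₂) *
      ((Real.pi / 2 * (nrm d y ⊔ L)) ^ (-b₁) *
        Real.log (Real.pi / 2 * (nrm d y ⊔ L) / L) ^ (-b₂)))))
      ≤ K₁ * Φ + (K₂ * Φ + (K₃ * Φ + K₃ * Φ)) :=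
        add_le_add hJ1 (add_le_add hJ2 (add_le_add hJ3a hJ3b))
  _ = K * Φ := by rw [hKdef]; ring
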